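/- arXiv:1412.1553 — 6 statements merged into one kernel-verified Lean document; each statement's English description precedes it below -/
import Mathlib

section
/- Fix 0 < p1, p2 < 1 with q_k = 1 - p_k, and δ > 0. Among all positive reals n1, n2 satisfying p1 q1/n1 + p2 q2/n2 = δ, the expected number of failures q1 n1 + q2 n2 is minimized when n1/(n1+n2) = √p1/(√p1 + √p2) (the RSIHR allocation). -/
/-! By Cauchy–Schwarz, `(q1 n1 + q2 n2) (p1 q1/n1 + p2 q2/n2) ≥ (q1 √p1 + q2 √p2)²` for all
positive `n1, n2`, with equality exactly when `n1 : n2 = √p1 : √p2`. Under the variance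
constraint the second factor is `δ`, so the expected number of failures is at least
`(q1 √p1 + q2 √p2)² / δ`, and the RSIHR allocation attains this bound. -/

open Real

theorem sq_add_le_mul_add_div {a b x y : ℝ} (hx : 0 < x) (hy : 0 < y) :
    (a + b) ^ 2 ≤ (x + y) * (a ^ 2 / x + b ^ 2 / y) := by
  rw [div_add_div _ _ hx.ne' hy.ne', mul_div_assoc', le_div_iff₀ (by positivity)]
  nlinarith [sq_nonneg (a * y - b * x), mul_pos hx hy]

theorem mul_add_div_eq_sq_of_eq_mul {a b x y t : ℝ} (ht : t ≠ 0) (hx : x = a * t)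
    (hy : y = b * t) : (x + y) * (a ^ 2 / x + b ^ 2 / y) = (a + b) ^ 2 := by
  have hdiv (c : ℝ) : c ^ 2 / (c * t) = c / t := by
    rcases eq_or_ne c 0 with rfl | hc
    · simp
    · field_simp
  rw [hx, hy, hdiv, hdiv]
  field_simp

theorem mul_div_eq_sq_div {p q n : ℝ} (hp : 0 ≤ p) (hq : q ≠ 0) :
    p * q / n = (q * √p) ^ 2 / (q * n) := by
  rw [mul_pow, sq_sqrt hp, mul_div_mul_comm, sq, mul_div_cancel_right₀ _ hq, mul_comm, mul_div_assoc]

theorem eq_mul_of_div_add_eq_div_add {m1 m2 s1 s2 : ℝ} (hm : m1 + m2 ≠ 0) (hs : s1 + s2 ≠ 0)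
    (h : m1 / (m1 + m2) = s1 / (s1 + s2)) :
    m1 = s1 * ((m1 + m2) / (s1 + s2)) ∧ m2 = s2 * ((m1 + m2) / (s1 + s2)) := by
  rw [div_eq_div_iff hm hs] at h
  constructor <;> field_simp <;> linarith

/-- Among all positive reals `n1, n2` with
`p1 q1/n1 + p2 q2/n2 = δ` (binary responses with success probabilities
`p1, p2`, `q_k = 1 - p_k`), the expected number of failures
`q1 n1 + q2 n2` is minimized at the RSIHR allocation
`n1/(n1+n2) = √p1/(√p1 + √p2)`. -/
theorem stmt2 (p1 p2 δ : ℝ) (hp1 : 0 < p1) (hp1' : p1 < 1) (hp2 : 0 < p2) (hp2' : p2 < 1)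
    (hδ : 0 < δ) (q1 q2 : ℝ) (hq1 : q1 = 1 - p1) (hq2 : q2 = 1 - p2)
    (m1 m2 : ℝ) (hm1 : 0 < m1) (hm2 : 0 < m2)
    (hmc : p1 * q1 / m1 + p2 * q2 / m2 = δ)
    (hmopt : m1 / (m1 + m2) = Real.sqrt p1 / (Real.sqrt p1 + Real.sqrt p2)) :
    ∀ n1 n2 : ℝ, 0 < n1 → 0 < n2 → p1 * q1 / n1 + p2 * q2 / n2 = δ →
      q1 * m1 + q2 * m2 ≤ q1 * n1 + q2 * n2 := by
  intro n1 n2 hn1 hn2 hnc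
  have hq1pos : 0 < q1 := by linarith
  have hq2pos : 0 < q2 := by linarith
  have hs : 0 < √p1 + √p2 := by positivity
  obtain ⟨hm1t, hm2t⟩ := eq_mul_of_div_add_eq_div_add (by positivity) hs.ne' hmopt
  have hconstraint (x1 x2 : ℝ) :
      p1 * q1 / x1 + p2 * q2 / x2 = (q1 * √p1) ^ 2 / (q1 * x1) + (q2 * √p2) ^ 2 / (q2 * x2) := by
    rw [mul_div_eq_sq_div hp1.le hq1pos.ne', mul_div_eq_sq_div hp2.le hq2pos.ne']
  have key : (q1 * m1 + q2 * m2) * δ ≤ (q1 * n1 + q2 * n2) * δ :=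
    calc (q1 * m1 + q2 * m2) * δ
        = (q1 * m1 + q2 * m2) * ((q1 * √p1) ^ 2 / (q1 * m1) + (q2 * √p2) ^ 2 / (q2 * m2)) := by
          rw [← hmc, hconstraint]
      _ = (q1 * √p1 + q2 * √p2) ^ 2 :=
          mul_add_div_eq_sq_of_eq_mul (t := (m1 + m2) / (√p1 + √p2)) (by positivity)
            (by rw [mul_assoc, ← hm1t]) (by rw [mul_assoc, ← hm2t])
      _ ≤ (q1 * n1 + q2 * n2) * ((q1 * √p1) ^ 2 / (q1 * n1) + (q2 * √p2) ^ 2 / (q2 * n2)) :=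
          sq_add_le_mul_add_div (by positivity) (by positivity)
      _ = (q1 * n1 + q2 * n2) * δ := by rw [← hnc, hconstraint]
  exact le_of_mul_le_mul_right key hδ
end

section
/- For all 0 < p1, p2 < 1 with q1 + q2 > 1/2 and q_k = 1 - p_k, the RPW variability q1 q2 [3 + 2(p1+p2)]/([2(q1+q2)−1](q1+q2)²) is strictly greater than the DL variability q1 q2 (p1+p2)/(q1+q2)³. -/
/-- the RPW variability strictly exceeds the DL variability
whenever `q1 + q2 > 1/2`. -/
theorem stmt5 (p1 p2 : ℝ) (hp1 : 0 < p1) (hp1' : p1 < 1) (hp2 : 0 < p2) (hp2' : p2 < 1)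
    (q1 q2 : ℝ) (hq1 : q1 = 1 - p1) (hq2 : q2 = 1 - p2) (hq : q1 + q2 > 1 / 2) :
    q1 * q2 * (3 + 2 * (p1 + p2)) / ((2 * (q1 + q2) - 1) * (q1 + q2) ^ 2) >
      q1 * q2 * (p1 + p2) / (q1 + q2) ^ 3 := by
  have hq1' : 0 < q1 := by rw [hq1]; linarith
  have hq2' : 0 < q2 := by rw [hq2]; linarith
  have hs : (0:ℝ) < q1 + q2 := by linarith
  have hd : (0:ℝ) < 2 * (q1 + q2) - 1 := by linarith
  have ht : (0:ℝ) < p1 + p2 := by linarith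
  have h1 : (0:ℝ) < (q1 + q2) ^ 3 := by positivity
  have h2 : (0:ℝ) < (2 * (q1 + q2) - 1) * (q1 + q2) ^ 2 := by positivity
  have key : (p1 + p2) / (q1 + q2) ^ 3 <
      (3 + 2 * (p1 + p2)) / ((2 * (q1 + q2) - 1) * (q1 + q2) ^ 2) := by
    rw [div_lt_div_iff₀ h1 h2]
    nlinarith [mul_pos (mul_pos hs hs) (by linarith : (0:ℝ) < 3 * (q1 + q2) + (p1 + p2))]
  have hq12 : 0 < q1 * q2 := mul_pos hq1' hq2'
  calc q1 * q2 * (p1 + p2) / (q1 + q2) ^ 3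
      = q1 * q2 * ((p1 + p2) / (q1 + q2) ^ 3) := by ring
    _ < q1 * q2 * ((3 + 2 * (p1 + p2)) / ((2 * (q1 + q2) - 1) * (q1 + q2) ^ 2)) :=
        (mul_lt_mul_iff_right₀ hq12).2 key
    _ = q1 * q2 * (3 + 2 * (p1 + p2)) / ((2 * (q1 + q2) - 1) * (q1 + q2) ^ 2) := by ring
end

section
/- For γ ≥ 0, define σ²_DBCD(γ) = q1 q2 [2 + (1+2γ)(p1+p2)] / ((1+2γ)(q1+q2)³) with 0 < p1, p2 < 1 and q_k = 1 - p_k. Then σ²_DBCD(γ) is strictly decreasing in γ, equals σ²_SMLP = q1 q2 (2 + p1+p2)/(q1+q2)³ at γ = 0, and tends to the lower bound σ²_LB = q1 q2 (p1+p2)/(q1+q2)³ as γ → ∞. -/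
open Filter Topology

/-- the DBCD variability
`σ²_DBCD(γ) = q1 q2 [2 + (1+2γ)(p1+p2)] / ((1+2γ)(q1+q2)³)` is strictly
decreasing in `γ ≥ 0`, equals σ²_SMLP at `γ = 0`, and tends to the lower
bound `σ²_LB = q1 q2 (p1+p2)/(q1+q2)³` as `γ → ∞`. -/
theorem stmt7 (p1 p2 : ℝ) (hp1 : 0 < p1) (hp1' : p1 < 1) (hp2 : 0 < p2) (hp2' : p2 < 1)
    (q1 q2 : ℝ) (hq1 : q1 = 1 - p1) (hq2 : q2 = 1 - p2)
    (σ : ℝ → ℝ)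
    (hσ : ∀ γ, σ γ =
      q1 * q2 * (2 + (1 + 2 * γ) * (p1 + p2)) / ((1 + 2 * γ) * (q1 + q2) ^ 3)) :
    StrictAntiOn σ (Set.Ici 0) ∧
      σ 0 = q1 * q2 * (2 + p1 + p2) / (q1 + q2) ^ 3 ∧
      Tendsto σ atTop (𝓝 (q1 * q2 * (p1 + p2) / (q1 + q2) ^ 3)) := by
  have hq1p : 0 < q1 := by rw [hq1]; linarith
  have hq2p : 0 < q2 := by rw [hq2]; linarith
  have hs : 0 < q1 + q2 := by linarith
  have key : ∀ γ : ℝ, 0 ≤ γ →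
      σ γ = q1 * q2 * (p1 + p2) / (q1 + q2) ^ 3
        + (2 * (q1 * q2 / (q1 + q2) ^ 3)) / (1 + 2 * γ) := by
    intro γ hγ
    rw [hσ]
    have h1 : (0:ℝ) < 1 + 2 * γ := by linarith
    field_simp
    ring
  refine ⟨?_, ?_, ?_⟩
  · intro x hx y hy hxy
    simp only [Set.mem_Ici] at hx hy
    rw [key x hx, key y hy]
    have h2 : (2 * (q1 * q2 / (q1 + q2) ^ 3)) / (1 + 2 * y)
        < (2 * (q1 * q2 / (q1 + q2) ^ 3)) / (1 + 2 * x) :=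
      div_lt_div_of_pos_left (by positivity) (by linarith) (by linarith)
    linarith
  · rw [hσ]
    norm_num
    ring_nf
  · have hlim : Tendsto (fun γ : ℝ => (1 : ℝ) + 2 * γ) atTop atTop :=
      tendsto_atTop_add_const_left atTop 1 (tendsto_id.const_mul_atTop two_pos)
    have h0 : Tendsto (fun γ : ℝ => q1 * q2 * (p1 + p2) / (q1 + q2) ^ 3
        + (2 * (q1 * q2 / (q1 + q2) ^ 3)) / (1 + 2 * γ)) atTop
        (𝓝 (q1 * q2 * (p1 + p2) / (q1 + q2) ^ 3 + 0)) :=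
      tendsto_const_nhds.add (Tendsto.div_atTop tendsto_const_nhds hlim)
    rw [add_zero] at h0
    refine h0.congr' ?_
    filter_upwards [eventually_ge_atTop (0:ℝ)] with γ hγ
    exact (key γ hγ).symm
end

section
/- Let v_k = (1/q_k)/Σ_{j=1}^K (1/q_j) with 0 < q_k < 1 for all k, p_k = 1 − q_k, v = (v_1,…,v_K), and A = I − 1ᵀ v (where 1 is the row vector of ones). Then (I − vᵀ1) diag(v_1 p_1/q_1, …, v_K p_K/q_K)(I − 1ᵀ v) = (∂v/∂q)ᵀ diag(p_1 q_1/v_1, …, p_K q_K/v_K)(∂v/∂q), where ∂v/∂q is the Jacobian matrix (∂v_k/∂q_j). -/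
open Matrix

/-! With `S = ∑ 1/q_j` and `A = I − 1ᵀv`, the quotient rule gives the Jacobian of the
allocation in closed form, `∂v/∂q = −S · diag(v_j²) · A`. Both sides of the identity are
therefore congruences `Aᵀ D A` of diagonal matrices, and the two diagonals agree because
`S q_k v_k = 1`. -/

theorem hasDerivAt_one_div_update {ι : Type*} [DecidableEq ι] {x : ι → ℝ} (hx : ∀ i, x i ≠ 0)
    (j i : ι) :
    HasDerivAt (fun t => 1 / Function.update x j t i)
      ((Pi.single j (-1 / x j ^ 2) : ι → ℝ) i) (x j) := by
  have h := (hasDerivAt_pi.1 (hasDerivAt_update x j (x j)) i).fun_inv (by simpa using hx i)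
  rcases eq_or_ne i j with rfl | hij
  · simpa [one_div, neg_div] using h
  · simpa [one_div, hij] using h

section ReciprocalWeights

variable {ι : Type*} [Fintype ι]

noncomputable def reciprocalWeights (x : ι → ℝ) (k : ι) : ℝ :=
  (1 / x k) / ∑ j, 1 / x j

theorem sum_one_div_pos [Nonempty ι] {x : ι → ℝ} (hx : ∀ i, 0 < x i) :
    0 < ∑ i, 1 / x i :=
  Finset.sum_pos (fun i _ => one_div_pos.2 (hx i)) Finset.univ_nonempty

variable [DecidableEq ι]

theorem hasDerivAt_reciprocalWeights_update {x : ι → ℝ} (hx : ∀ i, x i ≠ 0)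
    (hS : ∑ i, 1 / x i ≠ 0) (j k : ι) :
    HasDerivAt (fun t => reciprocalWeights (Function.update x j t) k)
      (-(∑ i, 1 / x i) * reciprocalWeights x j ^ 2 *
        ((1 : Matrix ι ι ℝ) j k - reciprocalWeights x k)) (x j) := by
  have hden : HasDerivAt (fun t => ∑ i, 1 / Function.update x j t i) (-1 / x j ^ 2) (x j) := by
    simpa [Finset.sum_fn] using
      HasDerivAt.sum (u := Finset.univ) fun i _ => hasDerivAt_one_div_update hx j i
  have hquot : HasDerivAt (fun t => reciprocalWeights (Function.update x j t) k) _ (x j) :=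
    (hasDerivAt_one_div_update hx j k).div hden (by rwa [Function.update_eq_self])
  simp only [Function.update_eq_self] at hquot
  convert hquot using 1
  rcases eq_or_ne j k with rfl | hjk
  · simp only [reciprocalWeights, one_apply_eq, Pi.single_eq_same]
    field_simp [hx j]
    ring
  · simp only [reciprocalWeights, one_apply_ne hjk, Pi.single_eq_of_ne' hjk]
    field_simp [hx j, hx k]
    ring

theorem jacobian_reciprocalWeights {x : ι → ℝ} (hx : ∀ i, 0 < x i) :
    (Matrix.of fun j k => deriv (fun t => reciprocalWeights (Function.update x j t) k) (x j)) =
      diagonal (fun j => -(∑ i, 1 / x i) * reciprocalWeights x j ^ 2) *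
        (1 - vecMulVec (fun _ => 1) (reciprocalWeights x)) := by
  ext j k
  have : Nonempty ι := ⟨j⟩
  rw [of_apply, (hasDerivAt_reciprocalWeights_update (fun i => (hx i).ne')
    (sum_one_div_pos hx).ne' j k).deriv, diagonal_mul]
  simp [vecMulVec_apply]

end ReciprocalWeights

theorem Matrix.transpose_diagonal_mul_mul_diagonal_mul {n R : Type*} [Fintype n] [DecidableEq n]
    [CommSemiring R] (f d : n → R) (B : Matrix n n R) :
    (diagonal f * B)ᵀ * diagonal d * (diagonal f * B) =
      Bᵀ * diagonal (fun k => f k * d k * f k) * B := by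
  simp only [transpose_mul, diagonal_transpose, Matrix.mul_assoc, ← Matrix.mul_assoc (diagonal _),
    diagonal_mul_diagonal]

theorem stmt10_general (K : ℕ) (q : Fin K → ℝ) (hq : ∀ k, 0 < q k ∧ q k < 1)
    (p : Fin K → ℝ)
    (vfun : (Fin K → ℝ) → Fin K → ℝ)
    (hvfun : ∀ (x : Fin K → ℝ) (k : Fin K),
      vfun x k = (1 / x k) / ∑ j, 1 / x j)
    (v : Fin K → ℝ) (hv : v = vfun q)
    (J : Matrix (Fin K) (Fin K) ℝ)
    (hJ : ∀ j k, J j k = deriv (fun t => vfun (Function.update q j t) k) (q j)) :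
    (1 - vecMulVec v (fun _ => 1)) *
        Matrix.diagonal (fun k => v k * p k / q k) *
        (1 - vecMulVec (fun _ => 1) v) =
      Jᵀ * Matrix.diagonal (fun k => p k * q k / v k) * J := by
  have hvfun' : vfun = reciprocalWeights := funext fun x => funext (hvfun x)
  subst hv hvfun'
  have hqpos : ∀ k, 0 < q k := fun k => (hq k).1
  have hJacobian : J = diagonal (fun j => -(∑ i, 1 / q i) * reciprocalWeights q j ^ 2) *
      (1 - vecMulVec (fun _ => 1) (reciprocalWeights q)) := by
    rw [← jacobian_reciprocalWeights hqpos]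
    ext j k
    exact hJ j k
  rw [hJacobian, transpose_diagonal_mul_mul_diagonal_mul, transpose_sub, transpose_one,
    transpose_vecMulVec]
  congr 3
  funext k
  have : Nonempty (Fin K) := ⟨k⟩
  simp only [reciprocalWeights]
  field_simp [(hqpos k).ne', (sum_one_div_pos hqpos).ne']

/-- equality of the two expressions for the asymptotic
covariance of the drop-the-loser rule:
`(I − vᵀ1) diag(v_k p_k/q_k) (I − 1ᵀv) = (∂v/∂q)ᵀ diag(p_k q_k/v_k) (∂v/∂q)`,
where `v_k(q) = (1/q_k)/Σ_j (1/q_j)` and the Jacobian `(∂v/∂q)_{jk} = ∂v_k/∂q_j`. -/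
theorem stmt10 (K : ℕ) (q : Fin K → ℝ) (hq : ∀ k, 0 < q k ∧ q k < 1)
    (p : Fin K → ℝ) (hp : ∀ k, p k = 1 - q k)
    (vfun : (Fin K → ℝ) → Fin K → ℝ)
    (hvfun : ∀ (x : Fin K → ℝ) (k : Fin K),
      vfun x k = (1 / x k) / ∑ j, 1 / x j)
    (v : Fin K → ℝ) (hv : v = vfun q)
    (J : Matrix (Fin K) (Fin K) ℝ)
    (hJ : ∀ j k, J j k = deriv (fun t => vfun (Function.update q j t) k) (q j)) :
    (1 - vecMulVec v (fun _ => 1)) *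
        Matrix.diagonal (fun k => v k * p k / q k) *
        (1 - vecMulVec (fun _ => 1) v) =
      Jᵀ * Matrix.diagonal (fun k => p k * q k / v k) * J :=
  stmt10_general K q hq p vfun hvfun v hv J hJ
end

section
/- Let (J_m) be {0,1}-valued random variables adapted to a filtration (F_m), representing correct guesses, with P(J_{m+1} = 1 | F_m) = max_k p_{m+1,k} where p_{m+1,k} are F_m-measurable allocation probabilities, nonnegative and summing to 1 over k = 1,…,K. If for each k, p_{m+1,k} → ρ_k in probability as m → ∞ (with ρ_k ≥ 0, Σ ρ_k = 1), then SB_n := (1/n) Σ_{m=1}^n P(J_m = 1) converges to max_k ρ_k. -/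
open MeasureTheory Filter Topology

/-! The conditional probability of a correct guess at step `m + 1` is `max_k p_{m+1,k}`, so by the
tower property `P(J_{m+1} = 1) = E[max_k p_{m+1,k}]`. Taking a maximum is 1-Lipschitz for the
sup-distance, hence `max_k p_{m,k} → max_k ρ_k` in probability; being conditional probabilities,
these maxima lie in `[0, 1]` almost surely, so bounded convergence gives
`P(J_m = 1) → max_k ρ_k`, and the Cesàro means `SB_n` have the same limit. -/

lemma Finset.exists_dist_sup'_le {ι : Type*} (s : Finset ι) (hs : s.Nonempty) (f g : ι → ℝ) :
    ∃ i ∈ s, dist (s.sup' hs f) (s.sup' hs g) ≤ dist (f i) (g i) := by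
  obtain ⟨i, hi, hfi⟩ := s.exists_mem_eq_sup' hs f
  obtain ⟨j, hj, hgj⟩ := s.exists_mem_eq_sup' hs g
  rcases le_total (s.sup' hs g) (s.sup' hs f) with hle | hle
  · refine ⟨i, hi, ?_⟩
    have := s.le_sup' g hi
    rw [Real.dist_eq, Real.dist_eq, abs_of_nonneg (sub_nonneg.2 hle)]
    exact (le_abs_self _).trans' (by linarith)
  · refine ⟨j, hj, ?_⟩
    have := s.le_sup' f hj
    rw [Real.dist_eq, Real.dist_eq, abs_of_nonpos (sub_nonpos.2 hle), abs_sub_comm]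
    exact (le_abs_self _).trans' (by linarith)

namespace MeasureTheory

variable {α : Type*} {m0 : MeasurableSpace α} {μ : Measure α}

theorem TendstoInMeasure.finset_sup' {ι κ : Type*} {l : Filter ι} {s : Finset κ}
    (hs : s.Nonempty) {f : κ → ι → α → ℝ} {g : κ → α → ℝ}
    (h : ∀ k ∈ s, TendstoInMeasure μ (f k) l (g k)) :
    TendstoInMeasure μ (fun n ω => s.sup' hs fun k => f k n ω) l
      (fun ω => s.sup' hs fun k => g k ω) := by
  intro ε hε
  have hsub : ∀ n, {ω | ε ≤ edist (s.sup' hs fun k => f k n ω) (s.sup' hs fun k => g k ω)}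
      ⊆ ⋃ k ∈ s, {ω | ε ≤ edist (f k n ω) (g k ω)} := by
    intro n ω hω
    obtain ⟨k, hk, hdist⟩ := s.exists_dist_sup'_le hs (fun k => f k n ω) (fun k => g k ω)
    rw [Set.mem_iUnion₂]
    refine ⟨k, hk, show ε ≤ _ from le_trans hω ?_⟩
    rw [edist_dist, edist_dist]
    exact ENNReal.ofReal_le_ofReal hdist
  have hsum : Tendsto (fun n => ∑ k ∈ s, μ {ω | ε ≤ edist (f k n ω) (g k ω)}) l (𝓝 0) := by
    simpa using tendsto_finsetSum s fun k hk => h k hk ε hε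
  exact tendsto_of_tendsto_of_tendsto_of_le_of_le tendsto_const_nhds hsum (fun _ => zero_le)
    fun n => (measure_mono (hsub n)).trans (measure_biUnion_finset_le _ _)

theorem TendstoInMeasure.tendsto_integral_of_dominated {E : Type*} [NormedAddCommGroup E]
    [NormedSpace ℝ E] {f : ℕ → α → E} {g : α → E} {bound : α → ℝ}
    (hf : ∀ n, AEStronglyMeasurable (f n) μ) (hbound : Integrable bound μ)
    (hf_le : ∀ n, ∀ᵐ a ∂μ, ‖f n a‖ ≤ bound a) (hfg : TendstoInMeasure μ f atTop g) :
    Tendsto (fun n => ∫ a, f n a ∂μ) atTop (𝓝 (∫ a, g a ∂μ)) := by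
  refine tendsto_of_subseq_tendsto fun ns hns => ?_
  obtain ⟨ms, -, hms⟩ := TendstoInMeasure.exists_seq_tendsto_ae (hfg.comp hns)
  exact ⟨ms, tendsto_integral_of_dominated_convergence bound (fun _ => hf _) hbound
    (fun _ => hf_le _) hms⟩

variable {m : MeasurableSpace α} {s : Set α}

lemma ae_abs_condExp_indicator_le_one :
    ∀ᵐ a ∂μ, |μ[s.indicator (fun _ => (1 : ℝ)) | m] a| ≤ 1 :=
  ae_bdd_abs_condExp_of_ae_bdd_abs <| Eventually.of_forall fun a => by
    by_cases ha : a ∈ s <;> simp [ha]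

lemma measureReal_eq_integral_of_condExp_indicator_ae_eq (hm : m ≤ m0)
    [SigmaFinite (μ.trim hm)] (hs : MeasurableSet[m0] s) {g : α → ℝ}
    (hg : μ[s.indicator (fun _ => (1 : ℝ)) | m] =ᵐ[μ] g) :
    μ.real s = ∫ a, g a ∂μ := by
  rw [← integral_congr_ae hg, integral_condExp hm, integral_indicator_const _ hs, smul_eq_mul,
    mul_one]

end MeasureTheory

theorem Filter.Tendsto.cesaro_Icc {u : ℕ → ℝ} {l : ℝ}
    (h : Tendsto (fun m => u (m + 1)) atTop (𝓝 l)) :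
    Tendsto (fun n : ℕ => (1 / (n : ℝ)) * ∑ m ∈ Finset.Icc 1 n, u m) atTop (𝓝 l) := by
  refine h.cesaro.congr fun n => ?_
  rw [one_div, ← Finset.Ico_add_one_right_eq_Icc, Finset.sum_Ico_eq_sum_range]
  simp only [add_comm 1, Nat.add_sub_cancel]

theorem stmt12_general {Ω : Type*} {m0 : MeasurableSpace Ω} (μ : Measure Ω)
    [IsProbabilityMeasure μ] (K : ℕ) [NeZero K] (F : Filtration ℕ m0)
    (J : ℕ → Ω → ℝ)
    (hJadapted : ∀ m, StronglyMeasurable[F m] (J m))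
    (p : ℕ → Fin K → Ω → ℝ)
    (hguess : ∀ m,
      μ[({ω | J (m + 1) ω = 1}).indicator (fun _ => (1 : ℝ)) | F m]
        =ᵐ[μ] fun ω => Finset.univ.sup' Finset.univ_nonempty (fun k => p (m + 1) k ω))
    (ρ : Fin K → ℝ)
    (hconv : ∀ k, TendstoInMeasure μ (fun m => p m k) atTop (fun _ => ρ k)) :
    Tendsto
      (fun n : ℕ => (1 / (n : ℝ)) * ∑ m ∈ Finset.Icc 1 n, (μ {ω | J m ω = 1}).toReal)
      atTop (𝓝 (Finset.univ.sup' Finset.univ_nonempty ρ)) := by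
  set g : ℕ → Ω → ℝ := fun m ω => Finset.univ.sup' Finset.univ_nonempty fun k => p m k ω
  have hg_conv : TendstoInMeasure μ (fun m => g (m + 1)) atTop
      (fun _ => Finset.univ.sup' Finset.univ_nonempty ρ) :=
    (TendstoInMeasure.finset_sup' Finset.univ_nonempty fun k _ => hconv k).comp
      (tendsto_add_atTop_nat 1)
  have hg_meas : ∀ m, AEStronglyMeasurable (g (m + 1)) μ := fun m =>
    (stronglyMeasurable_condExp.mono (F.le m)).aestronglyMeasurable.congr (hguess m)
  have hg_le : ∀ m, ∀ᵐ ω ∂μ, ‖g (m + 1) ω‖ ≤ 1 := fun m => by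
    filter_upwards [ae_abs_condExp_indicator_le_one (m := F m), hguess m] with ω hω hgω
    exact (congrArg abs hgω).symm.le.trans hω
  have hP : ∀ m, (μ {ω | J (m + 1) ω = 1}).toReal = ∫ ω, g (m + 1) ω ∂μ := fun m =>
    measureReal_eq_integral_of_condExp_indicator_ae_eq (F.le m)
      (F.le _ _ ((hJadapted (m + 1)).measurable (measurableSet_singleton 1))) (hguess m)
  have hE := hg_conv.tendsto_integral_of_dominated hg_meas (integrable_const 1) hg_le
  rw [integral_const, probReal_univ, one_smul] at hE
  exact Tendsto.cesaro_Icc (by simpa only [hP] using hE)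

/-- if the conditional probability of a correct guess given
`F_m` equals `max_k p_{m+1,k}`, and the allocation probabilities
`p_{m,k}` converge in probability to `ρ_k`, then the selection bias
`SB_n = (1/n) Σ_{m=1}^n P(J_m = 1)` converges to `max_k ρ_k`. -/
theorem stmt12 {Ω : Type*} {m0 : MeasurableSpace Ω} (μ : Measure Ω)
    [IsProbabilityMeasure μ] (K : ℕ) [NeZero K] (F : Filtration ℕ m0)
    (J : ℕ → Ω → ℝ) (hJ01 : ∀ m ω, J m ω = 0 ∨ J m ω = 1)
    (hJadapted : ∀ m, StronglyMeasurable[F m] (J m))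
    (p : ℕ → Fin K → Ω → ℝ)
    (hpmeas : ∀ m k, StronglyMeasurable[F m] (p (m + 1) k))
    (hpnonneg : ∀ m k ω, 0 ≤ p m k ω)
    (hpsum : ∀ m ω, ∑ k, p m k ω = 1)
    (hguess : ∀ m,
      μ[({ω | J (m + 1) ω = 1}).indicator (fun _ => (1 : ℝ)) | F m]
        =ᵐ[μ] fun ω => Finset.univ.sup' Finset.univ_nonempty (fun k => p (m + 1) k ω))
    (ρ : Fin K → ℝ) (hρnn : ∀ k, 0 ≤ ρ k) (hρsum : ∑ k, ρ k = 1)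
    (hconv : ∀ k, TendstoInMeasure μ (fun m => p m k) atTop (fun _ => ρ k)) :
    Tendsto
      (fun n : ℕ => (1 / (n : ℝ)) * ∑ m ∈ Finset.Icc 1 n, (μ {ω | J m ω = 1}).toReal)
      atTop (𝓝 (Finset.univ.sup' Finset.univ_nonempty ρ)) :=
  stmt12_general μ K F J hJadapted p hguess ρ hconv
end

section
/- Let g_k(x, y) = y_k (y_k/x_k)^γ / Σ_{j=1}^K y_j (y_j/x_j)^γ for x, y in the open simplex (all coordinates positive, summing to 1) and γ ≥ 0. Then g(x,y) lies in the simplex, g(ρ, ρ) = ρ for any simplex point ρ, the Jacobian of g in x at (ρ,ρ) equals −γ(I − 1ᵀρ), and the Jacobian in y at (ρ,ρ) equals (γ+1)(I − 1ᵀρ). -/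
/-!
Each weight `y k (y k / x k) ^ γ` is positive, so normalizing by their sum lands in the open
simplex, and at `x = y = ρ` every weight reduces to `ρ k`, whose sum is `1`. Moving only the
`j`-th coordinate of `x` (resp. `y`) away from `ρ` moves only the `j`-th weight, with slope
`-γ` (resp. `γ + 1`); the quotient rule for `w k / ∑ i, w i` at a point where the weights are
`ρ` and sum to `1` then gives the entry `c (δ_{jk} - ρ k)` with `c` that slope.
-/

open Finset

lemma div_sum_pos_and_sum_eq_one {ι : Type*} [Fintype ι] [Nonempty ι] {w : ι → ℝ}
    (hw : ∀ i, 0 < w i) :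
    (∀ k, 0 < w k / ∑ i, w i) ∧ ∑ k, w k / ∑ i, w i = 1 := by
  have hS : 0 < ∑ i, w i := sum_pos (fun i _ => hw i) univ_nonempty
  exact ⟨fun k => div_pos (hw k) hS, by rw [← sum_div, div_self hS.ne']⟩

lemma hasDerivAt_div_sum_of_single {ι : Type*} [Fintype ι] [DecidableEq ι]
    {f : ι → ℝ → ℝ} {ρ : ι → ℝ} {a c : ℝ} {j : ι}
    (hf : ∀ i, HasDerivAt (f i) (if i = j then c else 0) a) (hfa : ∀ i, f i a = ρ i)
    (hρ : ∑ i, ρ i = 1) (k : ι) :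
    HasDerivAt (fun t => f k t / ∑ i, f i t) (c * ((if j = k then 1 else 0) - ρ k)) a := by
  have hsum : HasDerivAt (fun t => ∑ i, f i t) c a := by
    simpa using HasDerivAt.fun_sum fun i (_ : i ∈ univ) => hf i
  have hsuma : ∑ i, f i a = 1 := by simp only [hfa, hρ]
  refine ((hf k).fun_div hsum (by simp [hsuma])).congr_deriv ?_
  rw [hsuma, hfa]
  rcases eq_or_ne j k with rfl | hjk
  · simp only [if_true]; ring
  · simp only [if_neg hjk, if_neg hjk.symm]; ring

lemma hasDerivAt_comp_update_apply {ι : Type*} [DecidableEq ι] {φ : ι → ℝ → ℝ}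
    {ρ : ι → ℝ} {j : ι} {c : ℝ} (hφ : HasDerivAt (φ j) c (ρ j)) (i : ι) :
    HasDerivAt (fun t => φ i (Function.update ρ j t i)) (if i = j then c else 0) (ρ j) := by
  rcases eq_or_ne i j with rfl | hij
  · simpa using hφ
  · simpa [Function.update_of_ne hij, hij] using hasDerivAt_const (ρ j) (φ i (ρ i))

lemma hasDerivAt_const_mul_const_div_rpow (γ : ℝ) {a : ℝ} (ha : 0 < a) :
    HasDerivAt (fun t => a * (a / t) ^ γ) (-γ) a := by
  have hdiv : HasDerivAt (fun t => a / t) (a * -(a ^ 2)⁻¹) a :=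
    (hasDerivAt_inv ha.ne').const_mul a
  refine ((hdiv.rpow_const (Or.inl (by simp [ha.ne']))).const_mul a).congr_deriv ?_
  rw [div_self ha.ne', Real.one_rpow]
  field_simp

lemma hasDerivAt_mul_div_const_rpow (γ : ℝ) {a : ℝ} (ha : 0 < a) :
    HasDerivAt (fun t => t * (t / a) ^ γ) (γ + 1) a := by
  have hdiv : HasDerivAt (fun t => t / a) a⁻¹ a := by
    simpa using (hasDerivAt_id a).div_const a
  refine ((hasDerivAt_id a).mul (hdiv.rpow_const (Or.inl (by simp [ha.ne'])))).congr_deriv ?_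
  rw [div_self ha.ne', Real.one_rpow, Real.one_rpow, id]
  field_simp
  ring

theorem stmt19_general (K : ℕ) (γ : ℝ)
    (g : (Fin K → ℝ) → (Fin K → ℝ) → Fin K → ℝ)
    (hg : ∀ x y k, g x y k =
      y k * (y k / x k) ^ γ / ∑ j, y j * (y j / x j) ^ γ) :
    (∀ x y : Fin K → ℝ, (∀ k, 0 < x k) → (∑ k, x k) = 1 →
        (∀ k, 0 < y k) → (∑ k, y k) = 1 →
        (∀ k, 0 < g x y k) ∧ ∑ k, g x y k = 1) ∧
      (∀ ρ : Fin K → ℝ, (∀ k, 0 < ρ k) → (∑ k, ρ k) = 1 →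
        (∀ k, g ρ ρ k = ρ k) ∧
        (∀ j k, deriv (fun t => g (Function.update ρ j t) ρ k) (ρ j) =
          -γ * ((if j = k then (1 : ℝ) else 0) - ρ k)) ∧
        (∀ j k, deriv (fun t => g ρ (Function.update ρ j t) k) (ρ j) =
          (γ + 1) * ((if j = k then (1 : ℝ) else 0) - ρ k))) := by
  refine ⟨fun x y hx hsx hy _ => ?_, fun ρ hρ hsρ => ?_⟩
  · have : Nonempty (Fin K) := by
      by_contra h
      simp [not_nonempty_iff.mp h] at hsx
    simp only [hg]
    exact div_sum_pos_and_sum_eq_one fun k =>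
      mul_pos (hy k) (Real.rpow_pos_of_pos (div_pos (hy k) (hx k)) γ)
  have hweight : ∀ k, ρ k * (ρ k / ρ k) ^ γ = ρ k := fun k => by
    rw [div_self (hρ k).ne', Real.one_rpow, mul_one]
  refine ⟨fun k => by simp only [hg, hweight, hsρ, div_one], fun j k => ?_, fun j k => ?_⟩
  · simp only [hg]
    exact (hasDerivAt_div_sum_of_single
      (hasDerivAt_comp_update_apply (φ := fun i s => ρ i * (ρ i / s) ^ γ)
        (hasDerivAt_const_mul_const_div_rpow γ (hρ j)))
      (fun i => by simp only [Function.update_eq_self, hweight]) hsρ k).deriv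
  · simp only [hg]
    exact (hasDerivAt_div_sum_of_single
      (hasDerivAt_comp_update_apply (φ := fun i s => s * (s / ρ i) ^ γ)
        (hasDerivAt_mul_div_const_rpow γ (hρ j)))
      (fun i => by simp only [Function.update_eq_self, hweight]) hsρ k).deriv

/-- the DBCD allocation function
`g_k(x,y) = y_k (y_k/x_k)^γ / Σ_j y_j (y_j/x_j)^γ` maps pairs of points of
the open simplex into the simplex, satisfies `g(ρ,ρ) = ρ`, and its
Jacobians in `x` and `y` at `(ρ,ρ)` are `−γ(I − 1ᵀρ)` and
`(γ+1)(I − 1ᵀρ)` respectively (entrywise `(I − 1ᵀρ)_{jk} = δ_{jk} − ρ_k`). -/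
theorem stmt19 (K : ℕ) (γ : ℝ) (hγ : 0 ≤ γ)
    (g : (Fin K → ℝ) → (Fin K → ℝ) → Fin K → ℝ)
    (hg : ∀ x y k, g x y k =
      y k * (y k / x k) ^ γ / ∑ j, y j * (y j / x j) ^ γ) :
    (∀ x y : Fin K → ℝ, (∀ k, 0 < x k) → (∑ k, x k) = 1 →
        (∀ k, 0 < y k) → (∑ k, y k) = 1 →
        (∀ k, 0 < g x y k) ∧ ∑ k, g x y k = 1) ∧
      (∀ ρ : Fin K → ℝ, (∀ k, 0 < ρ k) → (∑ k, ρ k) = 1 →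
        (∀ k, g ρ ρ k = ρ k) ∧
        (∀ j k, deriv (fun t => g (Function.update ρ j t) ρ k) (ρ j) =
          -γ * ((if j = k then (1 : ℝ) else 0) - ρ k)) ∧
        (∀ j k, deriv (fun t => g ρ (Function.update ρ j t) k) (ρ j) =
          (γ + 1) * ((if j = k then (1 : ℝ) else 0) - ρ k))) :=
  stmt19_general K γ g hg
end
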